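/- Let R be a ring and T4 the two-sided ideal of R generated by all commutators [a1,a2,a3,a4]. Then for all a1,...,a6 ∈ R, the element ([a1,a2]·[a3,a4] + [a1,a3]·[a2,a4])·[a5,a6] belongs to T4. -/
import Mathlib


/-- Commutator `[a,b] = a*b - b*a`. -/
def br {R : Type*} [Ring R] (a b : R) : R := a * b - b * a

/-- Left-normed triple commutator `[a,b,c] = [[a,b],c]`. -/
def br3 {R : Type*} [Ring R] (a b c : R) : R := br (br a b) c

/-- Left-normed fourth commutator `[a,b,c,d] = [[[a,b],c],d]`. -/
def br4 {R : Type*} [Ring R] (a b c d : R) : R := br (br3 a b c) d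

/-- The two-sided ideal generated by all fourth left-normed commutators. -/
def T4 (R : Type*) [Ring R] : TwoSidedIdeal R :=
  TwoSidedIdeal.span {x | ∃ a b c d : R, x = br4 a b c d}

lemma mem4 {R : Type*} [Ring R] (a b c d : R) : br4 a b c d ∈ T4 R :=
  TwoSidedIdeal.subset_span ⟨a, b, c, d, rfl⟩

/-- `[[x,y],[z,w]] * u ∈ T4`. -/
lemma cs_mem {R : Type*} [Ring R] (x y z w u : R) :
    (br x y * br z w - br z w * br x y) * u ∈ T4 R := by
  have h : (br x y * br z w - br z w * br x y) * u
      = br4 x y z w * u - br4 x y w z * u := by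
    simp only [br4, br3, br]; all_goals noncomm_ring
  rw [h]
  exact sub_mem ((T4 R).mul_mem_right _ _ (mem4 x y z w))
    ((T4 R).mul_mem_right _ _ (mem4 x y w z))

/-- `[x,y,z][e,f] + [x,y,e][z,f] ∈ T4`. -/
lemma F2 {R : Type*} [Ring R] (x y z e f : R) :
    br3 x y z * br e f + br3 x y e * br z f ∈ T4 R := by
  have h : br3 x y z * br e f + br3 x y e * br z f
      = -(br4 x y z f * e) + br4 x y (z * e) f + br4 x y e z * f
        - br4 x y e f * z - f * br4 x y e z := by
    simp only [br4, br3, br]; all_goals noncomm_ring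
  rw [h]
  refine sub_mem (sub_mem (add_mem (add_mem (neg_mem ?_) ?_) ?_) ?_) ?_
  · exact (T4 R).mul_mem_right _ _ (mem4 x y z f)
  · exact mem4 x y (z * e) f
  · exact (T4 R).mul_mem_right _ _ (mem4 x y e z)
  · exact (T4 R).mul_mem_right _ _ (mem4 x y e f)
  · exact (T4 R).mul_mem_left _ _ (mem4 x y e z)

/-- The key swap relation: `q(a,b,c,d)[e,f] + q(a,b,c,e)[d,f] ∈ T4`. -/
lemma r2_mem {R : Type*} [Ring R] (a b c d e f : R) :
    (br a b * br c d + br a c * br b d) * br e f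
      + (br a b * br c e + br a c * br b e) * br d f ∈ T4 R := by
  have h1 := cs_mem a c b d (br e f)
  have h2 := F2 a (b * c) d e f
  have h3 := (T4 R).mul_mem_left c _ (F2 a b d e f)
  have h4 := (T4 R).mul_mem_left b _ (F2 a c d e f)
  have h5 : (br3 a b d * c - c * br3 a b d) * br e f ∈ T4 R := by
    have e5 : (br3 a b d * c - c * br3 a b d) * br e f
        = br4 a b d c * br e f := by
      simp only [br4, br3, br]; all_goals noncomm_ring
    rw [e5]; exact (T4 R).mul_mem_right _ _ (mem4 a b d c)
  have h6 : (c * br3 a b e - br3 a b e * c) * br d f ∈ T4 R := by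
    have e6 : (c * br3 a b e - br3 a b e * c) * br d f
        = -(br4 a b e c * br d f) := by
      simp only [br4, br3, br]; all_goals noncomm_ring
    rw [e6]; exact neg_mem ((T4 R).mul_mem_right _ _ (mem4 a b e c))
  have h7 := cs_mem b e a c (br d f)
  have key : (br a b * br c d + br a c * br b d) * br e f
      + (br a b * br c e + br a c * br b e) * br d f
      = (br a c * br b d - br b d * br a c) * br e f
        + (br3 a (b * c) d * br e f + br3 a (b * c) e * br d f)
        - (br3 a b d * c - c * br3 a b d) * br e f
        - c * (br3 a b d * br e f + br3 a b e * br d f)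
        - b * (br3 a c d * br e f + br3 a c e * br d f)
        + (c * br3 a b e - br3 a b e * c) * br d f
        - (br b e * br a c - br a c * br b e) * br d f := by
    simp only [br3, br]; all_goals noncomm_ring
  rw [key]
  exact sub_mem (add_mem (sub_mem (sub_mem (sub_mem (add_mem h1 h2) h5) h3) h4) h6) h7

theorem comm222_mem_T4 {R : Type*} [Ring R] (a1 a2 a3 a4 a5 a6 : R) :
    (br a1 a2 * br a3 a4 + br a1 a3 * br a2 a4) * br a5 a6 ∈ T4 R := by
  have r1 := r2_mem a1 a2 a3 a4 a5 a6
  have r2 := r2_mem a1 a2 a5 a3 a6 a4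
  have r3 := r2_mem a1 a3 a5 a2 a6 a4
  have r4 := r2_mem a5 a1 a6 a2 a3 a4
  have c1 := cs_mem a1 a3 a5 a6 (br a2 a4)
  have c2 := cs_mem a1 a2 a5 a6 (br a3 a4)
  have key : (br a1 a2 * br a3 a4 + br a1 a3 * br a2 a4) * br a5 a6
      = ((br a1 a2 * br a3 a4 + br a1 a3 * br a2 a4) * br a5 a6
          + (br a1 a2 * br a3 a5 + br a1 a3 * br a2 a5) * br a4 a6)
        - ((br a1 a2 * br a5 a3 + br a1 a5 * br a2 a3) * br a6 a4
          + (br a1 a2 * br a5 a6 + br a1 a5 * br a2 a6) * br a3 a4)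
        - ((br a1 a3 * br a5 a2 + br a1 a5 * br a3 a2) * br a6 a4
          + (br a1 a3 * br a5 a6 + br a1 a5 * br a3 a6) * br a2 a4)
        + ((br a5 a1 * br a6 a2 + br a5 a6 * br a1 a2) * br a3 a4
          + (br a5 a1 * br a6 a3 + br a5 a6 * br a1 a3) * br a2 a4)
        + (br a1 a3 * br a5 a6 - br a5 a6 * br a1 a3) * br a2 a4
        + (br a1 a2 * br a5 a6 - br a5 a6 * br a1 a2) * br a3 a4 := by
    simp only [br]; all_goals noncomm_ring
  rw [key]
  exact add_mem (add_mem (add_mem (sub_mem (sub_mem r1 r2) r3) r4) c1) c2
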